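/- arXiv:math/0101184 — 3 statements merged into one kernel-verified Lean document; each statement's English description precedes it below -/
import Mathlib

section
/- Let P₀ = 1, P₁ = ½(1 + e), and P₂ = ½(1 + S·e) in ℂΓ. There exist ℂ-linear functionals ψ₀, ψ₁, ψ₂ : ℂΓ → ℂ, each satisfying the trace property ψᵢ(a·b) = ψᵢ(b·a) for all a, b ∈ ℂΓ, such that ψᵢ(Pⱼ) = δᵢⱼ for all i, j ∈ {0, 1, 2}. -/
namespace InfiniteDihedral

/-- The generator `S` of the infinite dihedral group `Γ = DihedralGroup 0`. -/
def S : DihedralGroup 0 := DihedralGroup.r 1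

/-- The order-two generator `e` of the infinite dihedral group, with `e·S·e = S⁻¹`. -/
def e : DihedralGroup 0 := DihedralGroup.sr 0

/-- The group algebra `ℂΓ` of the infinite dihedral group. -/
abbrev A : Type := MonoidAlgebra ℂ (DihedralGroup 0)

/-- The canonical inclusion of group elements into the group algebra `ℂΓ`. -/
noncomputable def of : DihedralGroup 0 →* A := MonoidAlgebra.of ℂ (DihedralGroup 0)

/-- The projections `P₀ = 1`, `P₁ = ½(1 + e)`, `P₂ = ½(1 + S·e)` in `ℂΓ`. -/
noncomputable def P : Fin 3 → A :=
  ![1, (2 : ℂ)⁻¹ • (1 + of e), (2 : ℂ)⁻¹ • (1 + of (S * e))]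

noncomputable def T (f : DihedralGroup 0 → ℂ) : A →ₗ[ℂ] ℂ :=
  (Finsupp.linearCombination ℂ f).comp (MonoidAlgebra.coeffLinearEquiv ℂ).toLinearMap

lemma T_single (f : DihedralGroup 0 → ℂ) (g : DihedralGroup 0) (c : ℂ) :
    T f (MonoidAlgebra.single g c) = c * f g := by
  show Finsupp.linearCombination ℂ f (Finsupp.single g c) = c * f g
  rw [Finsupp.linearCombination_single, smul_eq_mul]

lemma T_trace (f : DihedralGroup 0 → ℂ) (hf : ∀ x y, f (x * y) = f (y * x)) :
    ∀ a b : A, T f (a * b) = T f (b * a) := by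
  intro a b
  induction a using MonoidAlgebra.induction_linear with
  | zero => simp
  | add p q hp hq => simp [add_mul, mul_add, map_add, hp, hq]
  | single x c =>
    induction b using MonoidAlgebra.induction_linear with
    | zero => simp
    | add p q hp hq => simp [add_mul, mul_add, map_add, hp, hq]
    | single y d =>
      rw [MonoidAlgebra.single_mul_single, MonoidAlgebra.single_mul_single,
        T_single, T_single, hf, mul_comm c d]

def f0 : DihedralGroup 0 → ℂ
  | .r k => if k = 0 then 1 else 0
  | .sr _ => -1

def f1 : DihedralGroup 0 → ℂ
  | .r _ => 0
  | .sr k => if Even (show ℤ from k) then 2 else 0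

def f2 : DihedralGroup 0 → ℂ
  | .r _ => 0
  | .sr k => if Even (show ℤ from k) then 0 else 2

lemma hf0 : ∀ x y, f0 (x * y) = f0 (y * x) := by
  intro x y
  cases x with
  | r i => cases y with
    | r j => rw [DihedralGroup.r_mul_r, DihedralGroup.r_mul_r, add_comm]
    | sr j => rfl
  | sr i => cases y with
    | r j => rfl
    | sr j =>
      rw [DihedralGroup.sr_mul_sr, DihedralGroup.sr_mul_sr]
      show (if j - i = 0 then (1:ℂ) else 0) = if i - j = 0 then 1 else 0
      rw [if_congr (sub_eq_zero.trans (eq_comm.trans sub_eq_zero.symm)) rfl rfl]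

lemma parity_key (i j : ZMod 0) : (Even (show ℤ from j - i)) ↔ (Even (show ℤ from i + j)) := by
  show Even ((j : ℤ) - i) ↔ Even ((i : ℤ) + j)
  exact (@Int.even_sub j i).trans (Iff.trans (by tauto) (@Int.even_add i j).symm)

lemma hf1 : ∀ x y, f1 (x * y) = f1 (y * x) := by
  intro x y
  cases x with
  | r i => cases y with
    | r j => rfl
    | sr j =>
      rw [DihedralGroup.r_mul_sr, DihedralGroup.sr_mul_r]
      show (if Even (show ℤ from j - i) then (2:ℂ) else 0) = if Even (show ℤ from j + i) then 2 else 0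
      rw [if_congr ((parity_key i j).trans (by rw [add_comm])) rfl rfl]
  | sr i => cases y with
    | r j =>
      rw [DihedralGroup.sr_mul_r, DihedralGroup.r_mul_sr]
      show (if Even (show ℤ from i + j) then (2:ℂ) else 0) = if Even (show ℤ from i - j) then 2 else 0
      rw [if_congr ((by rw [add_comm] : Even (show ℤ from i + j) ↔ Even (show ℤ from j + i)).trans (parity_key j i).symm) rfl rfl]
    | sr j => rfl

lemma hf2 : ∀ x y, f2 (x * y) = f2 (y * x) := by
  intro x y
  cases x with
  | r i => cases y with
    | r j => rfl
    | sr j =>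
      rw [DihedralGroup.r_mul_sr, DihedralGroup.sr_mul_r]
      show (if Even (show ℤ from j - i) then (0:ℂ) else 2) = if Even (show ℤ from j + i) then 0 else 2
      rw [if_congr ((parity_key i j).trans (by rw [add_comm])) rfl rfl]
  | sr i => cases y with
    | r j =>
      rw [DihedralGroup.sr_mul_r, DihedralGroup.r_mul_sr]
      show (if Even (show ℤ from i + j) then (0:ℂ) else 2) = if Even (show ℤ from i - j) then 0 else 2
      rw [if_congr ((by rw [add_comm] : Even (show ℤ from i + j) ↔ Even (show ℤ from j + i)).trans (parity_key j i).symm) rfl rfl]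
    | sr j => rfl

/-- There are `ℂ`-linear trace functionals `ψ₀, ψ₁, ψ₂` on `ℂΓ` with `ψᵢ(Pⱼ) = δᵢⱼ`
for the projections `P₀ = 1`, `P₁ = ½(1 + e)`, `P₂ = ½(1 + S·e)`. -/
theorem exists_dual_trace_functionals :
    ∃ ψ : Fin 3 → (A →ₗ[ℂ] ℂ),
      (∀ i, ∀ a b : A, ψ i (a * b) = ψ i (b * a)) ∧
      (∀ i j, ψ i (P j) = if i = j then 1 else 0) := by
  refine ⟨![T f0, T f1, T f2], ?_, ?_⟩
  · intro i
    fin_cases i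
    · exact T_trace f0 hf0
    · exact T_trace f1 hf1
    · exact T_trace f2 hf2
  · have Tof : ∀ (f : DihedralGroup 0 → ℂ) (g : DihedralGroup 0), T f (of g) = f g := by
      intro f g
      have : of g = MonoidAlgebra.single g 1 := rfl
      rw [this, T_single, one_mul]
    have T1 : ∀ f : DihedralGroup 0 → ℂ, T f (1 : A) = f 1 := by
      intro f
      have : (1 : A) = of 1 := rfl
      rw [this, Tof]
    have hse : S * e = DihedralGroup.sr (-1) := by
      show DihedralGroup.r 1 * DihedralGroup.sr 0 = _
      rw [DihedralGroup.r_mul_sr]; norm_num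
    have TQ1 : ∀ f : DihedralGroup 0 → ℂ,
        T f ((2:ℂ)⁻¹ • (1 + of e)) = (2:ℂ)⁻¹ * (f 1 + f e) := by
      intro f
      rw [map_smul, map_add, T1, Tof, smul_eq_mul]
    have TQ2 : ∀ f : DihedralGroup 0 → ℂ,
        T f ((2:ℂ)⁻¹ • (1 + of (S * e))) = (2:ℂ)⁻¹ * (f 1 + f (DihedralGroup.sr (-1))) := by
      intro f
      rw [hse, map_smul, map_add, T1, Tof, smul_eq_mul]
    have h01 : f0 1 = 1 := by
      show (if (0 : ZMod 0) = 0 then (1:ℂ) else 0) = 1; simp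
    have h0e : f0 e = -1 := rfl
    have h0s : f0 (DihedralGroup.sr (-1)) = -1 := rfl
    have h11 : f1 1 = 0 := rfl
    have h1e : f1 e = 2 := by
      show (if Even (show ℤ from (0 : ZMod 0)) then (2:ℂ) else 0) = 2
      norm_num
      exact ⟨0, rfl⟩
    have h1s : f1 (DihedralGroup.sr (-1)) = 0 := by
      show (if Even (show ℤ from ((-1 : ZMod 0))) then (2:ℂ) else 0) = 0
      rw [if_neg]
      exact (Int.not_even_iff_odd).2 (⟨-1, rfl⟩ : Odd (show ℤ from ((-1 : ZMod 0))))
    have h21 : f2 1 = 0 := rfl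
    have h2e : f2 e = 0 := by
      show (if Even (show ℤ from (0 : ZMod 0)) then (0:ℂ) else 2) = 0
      norm_num
      exact ⟨0, rfl⟩
    have h2s : f2 (DihedralGroup.sr (-1)) = 2 := by
      show (if Even (show ℤ from ((-1 : ZMod 0))) then (0:ℂ) else 2) = 2
      rw [if_neg]
      exact (Int.not_even_iff_odd).2 (⟨-1, rfl⟩ : Odd (show ℤ from ((-1 : ZMod 0))))
    intro i j
    have hprod : of S * of e = of (DihedralGroup.sr (-1)) := by
      rw [← map_mul, hse]
    fin_cases i <;> fin_cases j <;>
      simp [P, T1, TQ1, TQ2, Tof, hprod, h01, h0e, h0s, h11, h1e, h1s, h21, h2e, h2s]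

end InfiniteDihedral
end

section
/- Every cyclic 1-cocycle φ on ℂΓ satisfies: φ(S^m, S^n) = 0 for all m, n ∈ ℤ; φ(1, S^n·e) = 0 for all n ∈ ℤ; and φ(S^m·e, S^n·e) = φ(e, S^{n−m}·e) for all m, n ∈ ℤ. -/
namespace InfiniteDihedral

theorem S_zpow (m : ℤ) : S ^ m = DihedralGroup.r (m : ZMod 0) := by
  show (DihedralGroup.r 1 : DihedralGroup 0) ^ m = DihedralGroup.r m
  induction m using Int.induction_on with
  | zero => rfl
  | succ n ih => rw [zpow_add_one, ih]; erw [DihedralGroup.r_mul_r]; rfl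
  | pred n ih =>
      rw [zpow_sub_one, ih,
        show ((DihedralGroup.r 1 : DihedralGroup 0))⁻¹ = DihedralGroup.r (-1) from rfl]
      erw [DihedralGroup.r_mul_r]
      congr 1

/-- Every cyclic 1-cocycle `φ` on `ℂΓ` (a bilinear functional with `φ(x,y) = −φ(y,x)` and
`φ(xy,z) − φ(x,yz) + φ(zx,y) = 0`) satisfies `φ(Sᵐ, Sⁿ) = 0`, `φ(1, Sⁿ·e) = 0`, and
`φ(Sᵐ·e, Sⁿ·e) = φ(e, S^(n−m)·e)` for all `m, n ∈ ℤ`. -/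
theorem cyclic_one_cocycle_values (φ : A →ₗ[ℂ] A →ₗ[ℂ] ℂ)
    (hskew : ∀ x y : A, φ x y = - φ y x)
    (hcocycle : ∀ x y z : A, φ (x * y) z - φ x (y * z) + φ (z * x) y = 0) :
    (∀ m n : ℤ, φ (of (S ^ m)) (of (S ^ n)) = 0) ∧
    (∀ n : ℤ, φ 1 (of (S ^ n * e)) = 0) ∧
    (∀ m n : ℤ, φ (of (S ^ m * e)) (of (S ^ n * e)) = φ (of e) (of (S ^ (n - m) * e))) := by
  let G : ℤ → ℤ → ℂ := fun u v => φ (of (DihedralGroup.sr u)) (of (DihedralGroup.sr v))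
  let C : ℤ → ℤ → ℂ := fun u v => φ (of (DihedralGroup.r u)) (of (DihedralGroup.r v))
  have key : ∀ g h k : DihedralGroup 0,
      φ (of (g * h)) (of k) - φ (of g) (of (h * k)) + φ (of (k * g)) (of h) = 0 := by
    intro g h k
    simpa only [map_mul] using hcocycle (of g) (of h) (of k)
  -- φ(x, 1) = 0 and φ(1, x) = 0
  have hz1 : ∀ g : DihedralGroup 0, φ (of g) (of 1) = 0 := by
    intro g
    have h := key 1 1 g
    rw [one_mul, one_mul, mul_one] at h
    linear_combination h
  have h1z : ∀ g : DihedralGroup 0, φ (of 1) (of g) = 0 := by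
    intro g
    rw [hskew (of 1) (of g), hz1 g, neg_zero]
  have hC0 : ∀ k : ℤ, C 0 k = 0 := fun k => h1z (DihedralGroup.r k)
  have skewG : ∀ u v : ℤ, G u v = - G v u :=
    fun u v => hskew (of (DihedralGroup.sr u)) (of (DihedralGroup.sr v))
  have Gdiag : ∀ u : ℤ, G u u = 0 := by
    intro u
    have h := skewG u u
    linear_combination h / 2
  -- key instances
  have keyE3 : ∀ m n k : ℤ, C (n - m) k - G m (n + k) + G (m - k) n = 0 :=
    fun m n k => key (DihedralGroup.sr m) (DihedralGroup.sr n) (DihedralGroup.r k)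
  have keyI1 : ∀ n m : ℤ, C (0 - -n) m - G (-n) (0 + m) + G (-n - m) 0 = 0 :=
    fun n m => key (DihedralGroup.sr (-n)) (DihedralGroup.sr 0) (DihedralGroup.r m)
  have cviaG : ∀ n m : ℤ, C n m = G (-n) m - G (-n - m) 0 := by
    intro n m
    have h := keyI1 n m
    rw [show (0 - -n : ℤ) = n by ring, show (0 + m : ℤ) = m by ring] at h
    linear_combination h
  have hper : ∀ t d : ℤ, G t (t + d) = G (t - d) t := by
    intro t d
    have h := keyE3 t t d
    rw [show (t - t : ℤ) = 0 by ring] at h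
    linear_combination hC0 d - h
  have E6 : ∀ d m n : ℤ, G (m - n) (m - n + d) + G n (n + d) = G m (m + d) + G (-d) 0 := by
    intro d m n
    have h1 := keyE3 m n (m - n + d)
    rw [show (n + (m - n + d) : ℤ) = m + d by ring,
      show (m - (m - n + d) : ℤ) = n - d by ring] at h1
    have h2 := cviaG (n - m) (m - n + d)
    rw [show (-(n - m) : ℤ) = m - n by ring,
      show (m - n - (m - n + d) : ℤ) = -d by ring] at h2
    have h3 := hper n d
    linear_combination h1 - h2 + h3
  -- for d ≠ 0, t ↦ G t (t+d) is constant
  have hconst : ∀ d t : ℤ, d ≠ 0 → G t (t + d) = G 0 (0 + d) := by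
    intro d t hd
    have hadd : ∀ a b : ℤ, G (a + b) (a + b + d) + G 0 (0 + d) = G a (a + d) + G b (b + d) := by
      intro a b
      have h := E6 d (a + b) b
      rw [show (a + b - b : ℤ) = a by ring] at h
      have h0 := E6 d 0 0
      rw [show ((0 : ℤ) - 0) = 0 by ring] at h0
      linear_combination h0 - h
    have hadd' : ∀ a b : ℤ, G (a + b) (a + b + d) - G 0 (0 + d) =
        (G a (a + d) - G 0 (0 + d)) + (G b (b + d) - G 0 (0 + d)) := by
      intro a b
      linear_combination hadd a b
    let F : ℤ →+ ℂ := AddMonoidHom.mk' (fun a : ℤ => G a (a + d) - G 0 (0 + d)) hadd'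
    have hFapp : ∀ a : ℤ, F a = G a (a + d) - G 0 (0 + d) := fun a => rfl
    have hlin : ∀ a : ℤ, F a = a • F 1 := by
      intro a
      conv_lhs => rw [show a = a • (1 : ℤ) by simp]
      rw [map_zsmul]
    have hFd : F d = 0 := by
      rw [hFapp]
      have h := hper d d
      rw [show (d - d : ℤ) = 0 by ring] at h
      rw [h, show (0 + d : ℤ) = d by ring, sub_self]
    have hF1 : F 1 = 0 := by
      have h := hlin d
      rw [hFd] at h
      have h2 : (d : ℂ) * F 1 = 0 := by rw [← zsmul_eq_mul]; exact h.symm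
      rcases mul_eq_zero.mp h2 with h3 | h3
      · exact absurd (Int.cast_eq_zero.mp h3) hd
      · exact h3
    have h := hlin t
    rw [hF1, smul_zero, hFapp] at h
    linear_combination h
  -- the main structure result
  have main : ∀ t s : ℤ, G t s = G 0 (s - t) := by
    intro t s
    by_cases h : s = t
    · subst h
      rw [show (s - s : ℤ) = 0 by ring, Gdiag, Gdiag]
    · have hd : s - t ≠ 0 := sub_ne_zero.mpr h
      have h2 := hconst (s - t) t hd
      rw [show (t + (s - t) : ℤ) = s by ring, show ((0 : ℤ) + (s - t)) = s - t by ring] at h2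
      exact h2
  have hCzero : ∀ m n : ℤ, C m n = 0 := by
    intro m n
    rw [cviaG m n, main (-m) n, main (-m - n) 0,
      show (n - -m : ℤ) = 0 - (-m - n) by ring, sub_self]
  refine ⟨?_, ?_, ?_⟩
  · intro m n
    rw [S_zpow m, S_zpow n]
    exact hCzero m n
  · intro n
    rw [S_zpow n]
    exact h1z (DihedralGroup.r n * e)
  · intro m n
    rw [S_zpow m, S_zpow n, S_zpow (n - m)]
    have h := main (0 - m) (0 - n)
    rw [show ((0 - n : ℤ) - (0 - m)) = 0 - (n - m) by ring] at h
    exact h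

end InfiniteDihedral
end

section
/- Every cyclic 1-cocycle on ℂΓ is a coboundary: for every cyclic 1-cocycle φ on ℂΓ there exists a ℂ-linear functional ψ : ℂΓ → ℂ such that φ(x, y) = ψ(x·y) − ψ(y·x) for all x, y ∈ ℂΓ. -/
namespace InfiniteDihedral

namespace Aux

open DihedralGroup

abbrev Γ : Type := DihedralGroup 0

lemma rr (i j : ℤ) : (r i * r j : Γ) = r ((i + j : ℤ)) := rfl
lemma rs (i j : ℤ) : (r i * sr j : Γ) = sr ((j - i : ℤ)) := rfl
lemma sr_r (i j : ℤ) : (sr i * r j : Γ) = sr ((i + j : ℤ)) := rfl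
lemma ss (i j : ℤ) : (sr i * sr j : Γ) = r ((j - i : ℤ)) := rfl
lemma rinv (i : ℤ) : ((r i)⁻¹ : Γ) = r ((-i : ℤ)) := rfl
lemma sinv (i : ℤ) : ((sr i)⁻¹ : Γ) = sr i := rfl
lemma one_eq : (1 : Γ) = r (0 : ℤ) := rfl
lemma r_eq_r_iff (i j : ℤ) : (r i : Γ) = r j ↔ i = j :=
  ⟨fun h => by injection h, fun h => by rw [h]⟩
lemma sr_eq_sr_iff (i j : ℤ) : (sr i : Γ) = sr j ↔ i = j :=
  ⟨fun h => by injection h, fun h => by rw [h]⟩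
lemma r_ne_sr (i j : ℤ) : (r i : Γ) ≠ sr j := fun h => by injection h

lemma cases' (v : Γ) : (∃ m : ℤ, v = r m) ∨ (∃ m : ℤ, v = sr m) := by
  cases v with
  | r m => exact Or.inl ⟨show ℤ from m, rfl⟩
  | sr m => exact Or.inr ⟨show ℤ from m, rfl⟩

/-- conjugacy class representative -/
def rep : Γ → Γ
  | .r m => .r ((Int.natAbs (show ℤ from m) : ℤ))
  | .sr m => .sr (((show ℤ from m) % 2 : ℤ))

/-- conjugator: `(cg v)⁻¹ * rep v * cg v = v` -/
def cg : Γ → Γ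
  | .r m => if 0 ≤ (show ℤ from m) then 1 else .sr (0 : ℤ)
  | .sr m => .r ((((show ℤ from m) - (show ℤ from m) % 2) / 2 : ℤ))

lemma rep_r (m : ℤ) : rep (r m) = r ((Int.natAbs m : ℤ)) := rfl
lemma rep_sr (m : ℤ) : rep (sr m) = sr ((m % 2 : ℤ)) := rfl
lemma cg_r (m : ℤ) : cg (r m) = if 0 ≤ m then 1 else sr (0 : ℤ) := rfl
lemma cg_sr (m : ℤ) : cg (sr m) = r (((m - m % 2) / 2 : ℤ)) := rfl

section

variable (ω : Γ → Γ → ℂ)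

/-- groupoid cocycle associated to `ω` -/
def Fc (u g : Γ) : ℂ := ω g (g⁻¹ * u)

/-- the potential -/
def psi0 (v : Γ) : ℂ := -Fc ω (rep v) (cg v)

variable (hskew : ∀ g h : Γ, ω g h = -ω h g)
  (hcoc : ∀ g h k : Γ, ω (g * h) k - ω g (h * k) + ω (k * g) h = 0)

include hcoc in
lemma ω_one_right (g : Γ) : ω g 1 = 0 := by
  have h := hcoc g 1 1
  simpa using h

include hskew hcoc in
lemma ω_one_left (g : Γ) : ω 1 g = 0 := by
  rw [hskew, ω_one_right ω hcoc, neg_zero]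

include hskew hcoc in
lemma F_one (u : Γ) : Fc ω u 1 = 0 := by
  unfold Fc; rw [inv_one, one_mul, ω_one_left ω hskew hcoc]

include hskew hcoc in
lemma F_mul (u g₁ g₂ : Γ) :
    Fc ω u (g₁ * g₂) = Fc ω u g₁ + Fc ω (g₁⁻¹ * u * g₁) g₂ := by
  have h := hcoc g₁ g₂ ((g₁ * g₂)⁻¹ * u)
  have e1 : g₂ * ((g₁ * g₂)⁻¹ * u) = g₁⁻¹ * u := by group
  have e2 : ((g₁ * g₂)⁻¹ * u) * g₁ = g₂⁻¹ * (g₁⁻¹ * u * g₁) := by group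
  rw [e1, e2, hskew (g₂⁻¹ * (g₁⁻¹ * u * g₁)) g₂] at h
  unfold Fc
  linear_combination h

include hskew hcoc in
lemma F_one_g (g : Γ) : Fc ω 1 g = 0 := by
  have hadd : ∀ a b : Γ, Fc ω 1 (a * b) = Fc ω 1 a + Fc ω 1 b := by
    intro a b
    have h := F_mul ω hskew hcoc 1 a b
    have e : a⁻¹ * 1 * a = (1 : Γ) := by group
    rwa [e] at h
  have hsr : ∀ m : ℤ, Fc ω 1 (sr m) = 0 := by
    intro m
    have h := hadd (sr m) (sr m)
    have e : (sr m * sr m : Γ) = 1 := by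
      rw [ss, one_eq, r_eq_r_iff]; omega
    rw [e, F_one ω hskew hcoc] at h
    linear_combination -h / 2
  rcases cases' g with ⟨m, rfl⟩ | ⟨m, rfl⟩
  · have e : (sr (0:ℤ) * sr m : Γ) = r m := by
      rw [ss, r_eq_r_iff]; omega
    have h := hadd (sr (0:ℤ)) (sr m)
    rw [e, hsr, hsr] at h
    simpa using h
  · exact hsr m

include hskew hcoc in
lemma Frr (m k : ℤ) : Fc ω (r m) (r k) = 0 := by
  rcases eq_or_ne m 0 with rfl | hm
  · rw [show (r (0:ℤ) : Γ) = 1 from rfl]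
    exact F_one_g ω hskew hcoc _
  · set f : ℤ → ℂ := fun k => Fc ω (r m) (r k) with hf
    have hadd : ∀ k l : ℤ, f (k + l) = f k + f l := by
      intro k l
      have h := F_mul ω hskew hcoc (r m) (r k) (r l)
      have e1 : (r k * r l : Γ) = r ((k + l : ℤ)) := rfl
      have e2 : ((r k)⁻¹ * r m * r k : Γ) = r m := by
        rw [rinv, rr, rr, r_eq_r_iff]; omega
      rw [e1, e2] at h
      simpa [hf] using h
    have hlin : ∀ k : ℤ, f k = (k : ℂ) * f 1 := by
      intro k
      have := map_zsmul (AddMonoidHom.mk' f hadd) k 1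
      simpa [zsmul_eq_mul] using this
    have hFω : ∀ k : ℤ, f k = ω (r k) (r ((m - k : ℤ))) := by
      intro k
      show Fc ω (r m) (r k) = _
      unfold Fc
      congr 1
      rw [rinv, rr, r_eq_r_iff]; omega
    have hskew' : ∀ k : ℤ, f k + f (m - k) = 0 := by
      intro k
      have h1 := hFω k
      have h2 := hFω (m - k)
      rw [show m - (m - k) = k by ring] at h2
      rw [h1, h2, hskew]
      ring
    have hm0 : f m = 0 := by
      have h := hadd m 0
      have h2 := hskew' m
      have h3 : f (m - m) = f 0 := by rw [sub_self]
      have h0 : f 0 = 0 := by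
        have := hadd 0 0
        simpa using this
      rw [h3, h0, add_zero] at h2
      exact h2
    have h1 : (m : ℂ) * f 1 = 0 := by rw [← hlin m]; exact hm0
    have hf1 : f 1 = 0 := by
      rcases mul_eq_zero.mp h1 with h | h
      · exact absurd (by exact_mod_cast h) hm
      · exact h
    rw [show Fc ω (r m) (r k) = f k from rfl, hlin k, hf1, mul_zero]

include hskew hcoc in
lemma Fsrsr (m : ℤ) : Fc ω (sr m) (sr m) = 0 := by
  have h := F_mul ω hskew hcoc (sr m) (sr m) (sr m)
  have e1 : (sr m * sr m : Γ) = 1 := by rw [ss, one_eq, r_eq_r_iff]; omega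
  have e2 : ((sr m)⁻¹ * sr m * sr m : Γ) = sr m := by
    rw [sinv, ss, rs, sr_eq_sr_iff]; omega
  rw [e1, e2, F_one ω hskew hcoc] at h
  linear_combination -h / 2

include hskew hcoc in
lemma stab (v g : Γ) (hst : g⁻¹ * v * g = v) : Fc ω v g = 0 := by
  rcases cases' v with ⟨m, rfl⟩ | ⟨m, rfl⟩ <;>
    rcases cases' g with ⟨k, rfl⟩ | ⟨k, rfl⟩
  · exact Frr ω hskew hcoc m k
  · -- v = r m, g = sr k : conjugate is r (-m)
    have e : ((sr k)⁻¹ * r m * sr k : Γ) = r ((-m : ℤ)) := by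
      rw [sinv, sr_r, ss, r_eq_r_iff]; omega
    rw [e, r_eq_r_iff] at hst
    have hm : m = 0 := by omega
    subst hm
    exact F_one_g ω hskew hcoc _
  · -- v = sr m, g = r k : conjugate is sr (m + 2k)
    have e : ((r k)⁻¹ * sr m * r k : Γ) = sr ((m + k + k : ℤ)) := by
      rw [rinv, rs, sr_r, sr_eq_sr_iff]; omega
    rw [e, sr_eq_sr_iff] at hst
    have hk : k = 0 := by omega
    subst hk
    rw [show (r (0:ℤ) : Γ) = 1 from rfl]
    exact F_one ω hskew hcoc _
  · -- v = sr m, g = sr k : conjugate is sr (2k - m)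
    have e : ((sr k)⁻¹ * sr m * sr k : Γ) = sr ((k - (m - k) : ℤ)) := by
      rw [sinv, ss, rs]
    rw [e, sr_eq_sr_iff] at hst
    have hk : k = m := by omega
    subst hk
    exact Fsrsr ω hskew hcoc _

lemma hcg (v : Γ) : (cg v)⁻¹ * rep v * cg v = v := by
  rcases cases' v with ⟨m, rfl⟩ | ⟨m, rfl⟩
  · rw [rep_r, cg_r]
    by_cases hm : 0 ≤ m
    · rw [if_pos hm, inv_one, one_mul, mul_one, r_eq_r_iff]; omega
    · rw [if_neg hm, sinv, sr_r, ss, r_eq_r_iff]; omega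
  · rw [rep_sr, cg_sr, rinv, rs, sr_r, sr_eq_sr_iff]; omega

lemma hrep (v g : Γ) : rep (g⁻¹ * v * g) = rep v := by
  rcases cases' v with ⟨m, rfl⟩ | ⟨m, rfl⟩ <;>
    rcases cases' g with ⟨k, rfl⟩ | ⟨k, rfl⟩
  · rw [rinv, rr, rr, rep_r, rep_r, r_eq_r_iff]; omega
  · rw [sinv, sr_r, ss, rep_r, rep_r, r_eq_r_iff]; omega
  · rw [rinv, rs, sr_r, rep_sr, rep_sr, sr_eq_sr_iff]; omega
  · rw [sinv, ss, rs, rep_sr, rep_sr, sr_eq_sr_iff]; omega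

include hskew hcoc in
lemma key (v g : Γ) : psi0 ω (g⁻¹ * v * g) = psi0 ω v - Fc ω v g := by
  set u := rep v with hu
  set a := cg v with ha
  set w := g⁻¹ * v * g with hw
  set b := cg w with hb
  have hrw : rep w = u := hrep v g
  have hav : a⁻¹ * u * a = v := hcg v
  have hbw : b⁻¹ * u * b = w := by
    have := hcg w
    rwa [hrw] at this
  -- the stabilizing element
  have hstab : (b⁻¹ * (a * g))⁻¹ * w * (b⁻¹ * (a * g)) = w := by
    have hbu : b * w * b⁻¹ = u := by rw [← hbw]; group
    have e1 : (b⁻¹ * (a * g))⁻¹ * w * (b⁻¹ * (a * g))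
        = (a * g)⁻¹ * (b * w * b⁻¹) * (a * g) := by group
    have e2 : (a * g)⁻¹ * u * (a * g) = g⁻¹ * (a⁻¹ * u * a) * g := by group
    rw [e1, hbu, e2, hav]
  have hFw : Fc ω w (b⁻¹ * (a * g)) = 0 := stab ω hskew hcoc w _ hstab
  have h1 : Fc ω u (a * g) = Fc ω u a + Fc ω v g := by
    have := F_mul ω hskew hcoc u a g
    rwa [hav] at this
  have h2 : Fc ω u (a * g) = Fc ω u b := by
    have hsplit : a * g = b * (b⁻¹ * (a * g)) := by group
    rw [hsplit, F_mul ω hskew hcoc u b (b⁻¹ * (a * g)), hbw, hFw, add_zero]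
  have hpw : psi0 ω w = -Fc ω u b := by
    unfold psi0
    rw [hrw, ← hb]
  rw [hpw, ← h2, h1]
  unfold psi0
  ring

include hskew hcoc in
lemma main (g h : Γ) : ω g h = psi0 ω (g * h) - psi0 ω (h * g) := by
  have k := key ω hskew hcoc (g * h) g
  have e1 : g⁻¹ * (g * h) * g = h * g := by group
  have e2 : Fc ω (g * h) g = ω g h := by
    unfold Fc
    congr 1
    group
  rw [e1, e2] at k
  linear_combination k

end

end Aux

/-- Every cyclic 1-cocycle on `ℂΓ` is a coboundary: for every `ℂ`-bilinear
`φ : ℂΓ × ℂΓ → ℂ` with `φ(x,y) = −φ(y,x)` and `φ(xy,z) − φ(x,yz) + φ(zx,y) = 0`,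
there is a `ℂ`-linear functional `ψ : ℂΓ → ℂ` with `φ(x,y) = ψ(xy) − ψ(yx)`. -/
theorem cyclic_one_cocycle_is_coboundary (φ : A →ₗ[ℂ] A →ₗ[ℂ] ℂ)
    (hskew : ∀ x y : A, φ x y = - φ y x)
    (hcocycle : ∀ x y z : A, φ (x * y) z - φ x (y * z) + φ (z * x) y = 0) :
    ∃ ψ : A →ₗ[ℂ] ℂ, ∀ x y : A, φ x y = ψ (x * y) - ψ (y * x) := by
  classical
  set Γ := DihedralGroup 0
  let of := MonoidAlgebra.of ℂ Γ
  set ω : Γ → Γ → ℂ := fun g h => φ (of g) (of h) with hω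
  have hskewω : ∀ g h : Γ, ω g h = -ω h g := fun g h => hskew (of g) (of h)
  have hcocω : ∀ g h k : Γ, ω (g * h) k - ω g (h * k) + ω (k * g) h = 0 := by
    intro g h k
    have := hcocycle (of g) (of h) (of k)
    simpa [hω, map_mul] using this
  set ψ : A →ₗ[ℂ] ℂ := (Finsupp.lift ℂ ℂ Γ) (Aux.psi0 ω) ∘ₗ
    (MonoidAlgebra.coeffLinearEquiv ℂ).toLinearMap with hψ
  have hψof : ∀ g : Γ, ψ (of g) = Aux.psi0 ω g := by
    intro g
    show (Finsupp.lift ℂ ℂ Γ) (Aux.psi0 ω) (Finsupp.single g (1 : ℂ)) = _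
    rw [Finsupp.lift_apply, Finsupp.sum_single_index] <;> simp
  refine ⟨ψ, fun x y => ?_⟩
  induction x using MonoidAlgebra.induction_on with
  | of g =>
    induction y using MonoidAlgebra.induction_on with
    | of h =>
      have base := Aux.main ω hskewω hcocω g h
      rw [hω] at base
      calc φ (of g) (of h) = Aux.psi0 ω (g * h) - Aux.psi0 ω (h * g) := base
        _ = ψ (of g * of h) - ψ (of h * of g) := by
            rw [← map_mul, ← map_mul, hψof, hψof]
    | add y₁ y₂ h1 h2 =>
      rw [map_add, h1, h2, mul_add, add_mul, map_add, map_add]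
      ring
    | smul c y hy =>
      rw [map_smul, smul_eq_mul, hy, mul_smul_comm, smul_mul_assoc, map_smul, map_smul,
        smul_eq_mul, smul_eq_mul]
      ring
  | add x₁ x₂ h1 h2 =>
    rw [map_add, LinearMap.add_apply, h1, h2, add_mul, mul_add, map_add, map_add]
    ring
  | smul c x hx =>
    rw [map_smul, LinearMap.smul_apply, smul_eq_mul, hx, smul_mul_assoc, mul_smul_comm,
      map_smul, map_smul, smul_eq_mul, smul_eq_mul]
    ring

end InfiniteDihedral
end
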